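/- Fix a positive integer n, a real ε with 0 < ε < 1, reals 0 < a < b, and a family of probability measures μ_θ on ℤ for θ ∈ [a,b] such that for all integers k ≤ l, the map θ ↦ μ_θ({m ∈ ℤ : k ≤ m ≤ l}) is continuous and unimodal on [a,b]. Define C(θ) = μ_θ({m ∈ ℤ : |m/n − θ| < ε·θ}). Let α < β be two elements of [a,b] such that there is no integer ℓ with α < ℓ/(n(1−ε)) < β and no integer ℓ with α < ℓ/(n(1+ε)) < β. Then C(θ) ≥ min{C(α), C(β)} for every θ ∈ (α, β). -/

import Mathlib

/-!
For `θ ∈ (α, β)` the window `{m : n(1-ε)θ < m < n(1+ε)θ}` of the event `|m/n - θ| < εθ` is the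
integer interval `[k, l] = [⌈n(1-ε)β⌉, ⌊n(1+ε)α⌋]`: no integer `m` can enter or leave it while `θ`
moves inside `(α, β)`, since that would put `m/(n(1±ε))` strictly between `α` and `β`. The same
interval contains the windows at `α` and `β`. Hence `C` coincides on `(α, β)` with the unimodal
function `θ ↦ μ_θ [k, l]`, which dominates `C` at both endpoints, and a unimodal function is
at least the smaller of its values at the ends of any interval.
-/

open MeasureTheory Set

theorem min_le_of_monotoneOn_of_antitoneOn {α β : Type*} [LinearOrder α] [LinearOrder β]
    {f : α → β} {a b x s t θ : α} (hmono : MonotoneOn f (Icc a x))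
    (hanti : AntitoneOn f (Icc x b)) (has : a ≤ s) (htb : t ≤ b) (hsθ : s ≤ θ) (hθt : θ ≤ t) :
    min (f s) (f t) ≤ f θ := by
  rcases le_or_gt θ x with hθx | hxθ
  · exact (min_le_left _ _).trans
      (hmono ⟨has, hsθ.trans hθx⟩ ⟨has.trans hsθ, hθx⟩ hsθ)
  · exact (min_le_right _ _).trans
      (hanti ⟨hxθ.le, hθt.trans htb⟩ ⟨hxθ.le.trans hθt, htb⟩ hθt)

section GridPoints

variable {c α β θ : ℝ} {m : ℤ}

theorem ceil_mul_le_of_forall_not_mem_Ioo (hc : 0 < c)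
    (hgrid : ¬∃ ℓ : ℤ, α < (ℓ : ℝ) / c ∧ (ℓ : ℝ) / c < β) (hαθ : α ≤ θ) (hm : c * θ < m) :
    ⌈c * β⌉ ≤ m := by
  have := mul_le_mul_of_nonneg_left hαθ hc.le
  refine Int.ceil_le.mpr (not_lt.mp fun hmβ => hgrid ⟨m, ?_, ?_⟩)
  · rw [lt_div_iff₀ hc]; linarith
  · rw [div_lt_iff₀ hc]; linarith

theorem le_floor_mul_of_forall_not_mem_Ioo (hc : 0 < c)
    (hgrid : ¬∃ ℓ : ℤ, α < (ℓ : ℝ) / c ∧ (ℓ : ℝ) / c < β) (hθβ : θ ≤ β) (hm : (m : ℝ) < c * θ) :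
    m ≤ ⌊c * α⌋ := by
  have := mul_le_mul_of_nonneg_left hθβ hc.le
  refine Int.le_floor.mpr (not_lt.mp fun hαm => hgrid ⟨m, ?_, ?_⟩)
  · rw [lt_div_iff₀ hc]; linarith
  · rw [div_lt_iff₀ hc]; linarith

end GridPoints

def relErrorWindow (n : ℕ) (ε θ : ℝ) : Set ℤ := {m : ℤ | |(m : ℝ) / n - θ| < ε * θ}

section RelErrorWindow

variable {n : ℕ} {ε θ α β : ℝ}

theorem mem_relErrorWindow_iff (hn : 0 < n) {m : ℤ} :
    m ∈ relErrorWindow n ε θ ↔ n * (1 - ε) * θ < m ∧ (m : ℝ) < n * (1 + ε) * θ := by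
  have hn' : (0 : ℝ) < n := Nat.cast_pos.mpr hn
  rw [relErrorWindow, mem_ofPred_eq, abs_lt, lt_sub_iff_add_lt, sub_lt_iff_lt_add,
    lt_div_iff₀ hn', div_lt_iff₀ hn']
  constructor <;> rintro ⟨h₁, h₂⟩ <;> constructor <;> linarith

theorem relErrorWindow_subset_Icc (hn : 0 < n) (hε0 : 0 < ε) (hε1 : ε < 1)
    (h1 : ¬∃ ℓ : ℤ, α < (ℓ : ℝ) / (n * (1 - ε)) ∧ (ℓ : ℝ) / (n * (1 - ε)) < β)
    (h2 : ¬∃ ℓ : ℤ, α < (ℓ : ℝ) / (n * (1 + ε)) ∧ (ℓ : ℝ) / (n * (1 + ε)) < β)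
    (hθ : θ ∈ Icc α β) :
    relErrorWindow n ε θ ⊆ Icc ⌈n * (1 - ε) * β⌉ ⌊n * (1 + ε) * α⌋ := by
  have hn' : (0 : ℝ) < n := Nat.cast_pos.mpr hn
  intro m hm
  obtain ⟨hlo, hhi⟩ := (mem_relErrorWindow_iff hn).mp hm
  exact ⟨ceil_mul_le_of_forall_not_mem_Ioo (mul_pos hn' (by linarith)) h1 hθ.1 hlo,
    le_floor_mul_of_forall_not_mem_Ioo (mul_pos hn' (by linarith)) h2 hθ.2 hhi⟩

theorem Icc_subset_relErrorWindow (hn : 0 < n) (hε0 : 0 < ε) (hε1 : ε < 1)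
    (hθ : θ ∈ Ioo α β) :
    Icc ⌈n * (1 - ε) * β⌉ ⌊n * (1 + ε) * α⌋ ⊆ relErrorWindow n ε θ := by
  have hn' : (0 : ℝ) < n := Nat.cast_pos.mpr hn
  rintro m ⟨hk, hl⟩
  have hβm : n * (1 - ε) * β ≤ m := Int.ceil_le.mp hk
  have hmα : (m : ℝ) ≤ n * (1 + ε) * α := Int.le_floor.mp hl
  have hA : n * (1 - ε) * θ < n * (1 - ε) * β :=
    mul_lt_mul_of_pos_left hθ.2 (mul_pos hn' (by linarith))
  have hB : n * (1 + ε) * α < n * (1 + ε) * θ :=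
    mul_lt_mul_of_pos_left hθ.1 (mul_pos hn' (by linarith))
  exact (mem_relErrorWindow_iff hn).mpr ⟨hA.trans_le hβm, hmα.trans_lt hB⟩

end RelErrorWindow

theorem coverage_lower_bound_between_consecutive_grid_points_relative_general
    (n : ℕ) (hn : 0 < n) (ε : ℝ) (hε0 : 0 < ε) (hε1 : ε < 1)
    (a b : ℝ)
    (μ : ℝ → Measure ℤ)
    (hprob : ∀ θ ∈ Icc a b, IsProbabilityMeasure (μ θ))
    (hunim : ∀ k l : ℤ, k ≤ l → ∃ x ∈ Icc a b,
      MonotoneOn (fun θ => (μ θ {m : ℤ | k ≤ m ∧ m ≤ l}).toReal) (Icc a x) ∧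
      AntitoneOn (fun θ => (μ θ {m : ℤ | k ≤ m ∧ m ≤ l}).toReal) (Icc x b))
    (α β : ℝ) (hα : α ∈ Icc a b) (hβ : β ∈ Icc a b) (hαβ : α < β)
    (h1 : ¬∃ ℓ : ℤ, α < (ℓ : ℝ) / (n * (1 - ε)) ∧ (ℓ : ℝ) / (n * (1 - ε)) < β)
    (h2 : ¬∃ ℓ : ℤ, α < (ℓ : ℝ) / (n * (1 + ε)) ∧ (ℓ : ℝ) / (n * (1 + ε)) < β) :
    let C : ℝ → ℝ := fun θ => (μ θ {m : ℤ | |(m : ℝ) / n - θ| < ε * θ}).toReal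
    ∀ θ ∈ Ioo α β, min (C α) (C β) ≤ C θ := by
  intro C θ hθ
  set k := ⌈n * (1 - ε) * β⌉
  set l := ⌊n * (1 + ε) * α⌋
  have hsub : ∀ θ' ∈ Icc α β, relErrorWindow n ε θ' ⊆ Icc k l :=
    fun θ' hθ' => relErrorWindow_subset_Icc hn hε0 hε1 h1 h2 hθ'
  have hCθ : C θ = (μ θ (Icc k l)).toReal := by
    simp only [C]
    rw [← relErrorWindow, (hsub θ (Ioo_subset_Icc_self hθ)).antisymm
      (Icc_subset_relErrorWindow hn hε0 hε1 hθ)]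
  have hCα : C α ≤ (μ α (Icc k l)).toReal :=
    have := hprob α hα; measureReal_mono (hsub α ⟨le_rfl, hαβ.le⟩)
  have hCβ : C β ≤ (μ β (Icc k l)).toReal :=
    have := hprob β hβ; measureReal_mono (hsub β ⟨hαβ.le, le_rfl⟩)
  rw [hCθ]
  by_cases hkl : k ≤ l
  · obtain ⟨x, -, hmono, hanti⟩ := hunim k l hkl
    exact (min_le_min hCα hCβ).trans
      (min_le_of_monotoneOn_of_antitoneOn (f := fun θ => (μ θ (Icc k l)).toReal)
        hmono hanti hα.1 hβ.2 hθ.1.le hθ.2.le)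
  · rw [Icc_eq_empty hkl] at hCα
    simp only [measure_empty, ENNReal.toReal_zero] at hCα
    exact (min_le_left _ _).trans (hCα.trans ENNReal.toReal_nonneg)

/-- Lemma 10 of Chen & Chen: if `α < β` in `[a,b]` are such that no grid point
`ℓ/(n(1−ε))` or `ℓ/(n(1+ε))` lies strictly between them, then the coverage
probability `C(θ) = μ_θ{|m/n − θ| < εθ}` satisfies
`C(θ) ≥ min(C(α), C(β))` for all `θ ∈ (α, β)`. -/
theorem coverage_lower_bound_between_consecutive_grid_points_relative
    (n : ℕ) (hn : 0 < n) (ε : ℝ) (hε0 : 0 < ε) (hε1 : ε < 1)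
    (a b : ℝ) (ha : 0 < a) (hab : a < b)
    (μ : ℝ → Measure ℤ)
    (hprob : ∀ θ ∈ Icc a b, IsProbabilityMeasure (μ θ))
    (hcont : ∀ k l : ℤ, k ≤ l →
      ContinuousOn (fun θ => (μ θ {m : ℤ | k ≤ m ∧ m ≤ l}).toReal) (Icc a b))
    (hunim : ∀ k l : ℤ, k ≤ l → ∃ x ∈ Icc a b,
      MonotoneOn (fun θ => (μ θ {m : ℤ | k ≤ m ∧ m ≤ l}).toReal) (Icc a x) ∧
      AntitoneOn (fun θ => (μ θ {m : ℤ | k ≤ m ∧ m ≤ l}).toReal) (Icc x b))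
    (α β : ℝ) (hα : α ∈ Icc a b) (hβ : β ∈ Icc a b) (hαβ : α < β)
    (h1 : ¬∃ ℓ : ℤ, α < (ℓ : ℝ) / (n * (1 - ε)) ∧ (ℓ : ℝ) / (n * (1 - ε)) < β)
    (h2 : ¬∃ ℓ : ℤ, α < (ℓ : ℝ) / (n * (1 + ε)) ∧ (ℓ : ℝ) / (n * (1 + ε)) < β) :
    let C : ℝ → ℝ := fun θ => (μ θ {m : ℤ | |(m : ℝ) / n - θ| < ε * θ}).toReal
    ∀ θ ∈ Ioo α β, min (C α) (C β) ≤ C θ :=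
  coverage_lower_bound_between_consecutive_grid_points_relative_general n hn ε hε0 hε1 a b μ hprob
    hunim α β hα hβ hαβ h1 h2
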